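/- Assume a, b, c, d > 0 with a > d and b > c. Then for every x₀ ∈ (0,∞)² and every ε > 0: liminf_{r→∞} inf{ t ≥ 0 : x^r(t) ∉ (ε,∞)² } > 0; that is, the exit time of the flow started from r·x₀ from the domain 𝒟_ε = (ε,∞)² stays bounded away from 0 as r → ∞. -/

import Mathlib

open Real Set Filter ENNReal

/-- The competitive Lotka–Volterra vector field. -/
def bLV (τ₁ τ₂ a b c d : ℝ) (x : ℝ × ℝ) : ℝ × ℝ :=
  (x.1 * (τ₁ - a * x.1 - c * x.2), x.2 * (τ₂ - b * x.2 - d * x.1))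

/-- Exit time of `t ↦ X r t` from the domain `𝒟_ε = (ε,∞)²`
(with values in `ℝ≥0∞`, `inf ∅ = ∞`). -/
noncomputable def exitT (X : ℝ → ℝ → ℝ × ℝ) (ε r : ℝ) : ℝ≥0∞ :=
  sInf (ENNReal.ofReal '' {t : ℝ | 0 ≤ t ∧ ¬(ε < (X r t).1 ∧ ε < (X r t).2)})

/-!
Starting from `r x₀` with `r` large, the quadratic terms immediately damp both coordinates from
size `r` to size about `1 / t`; the point is that neither falls below `ε` before a time `δ`
independent of `r`. Compare each coordinate with barriers `k e^{± M t} / (t + s₀)`, where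
`M > |τᵢ|` and `s₀ ∼ 1 / r`. Since the other coordinate is nonnegative,
`x₁ ≤ e^{M t} / (a (t + s₀))` and `x₂ ≤ e^{M t} / (b (t + s₀))`. Feeding the bound on `x₂` into
the equation for `x₁` shows `x₁ ≥ κ e^{-M t} / (t + s₀)` on `[0, δ]` as soon as
`a κ + (c / b) e^{M δ} < 1`, which small `κ` and `δ` achieve exactly because `c < b`; symmetrically
for `x₂`, using `d < a`. Once `s₀ ≤ δ`, this lower barrier is at least `κ e^{-M δ} / (2 δ)`, which
exceeds `ε` for small `δ`.
-/

open Topology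

noncomputable def barrier (k m s₀ t : ℝ) : ℝ := k * exp (m * t) / (t + s₀)

section Barrier

variable {k m s₀ t : ℝ}

lemma barrier_pos (hk : 0 < k) (ht : 0 < t + s₀) : 0 < barrier k m s₀ t := by
  unfold barrier; positivity

lemma hasDerivAt_barrier (ht : t + s₀ ≠ 0) :
    HasDerivAt (barrier k m s₀) (barrier k m s₀ t * (m - (t + s₀)⁻¹)) t := by
  have hexp : HasDerivAt (fun t => k * exp (m * t)) (k * (exp (m * t) * m)) t :=
    (((hasDerivAt_id t).const_mul m).exp.const_mul k).congr_deriv (by simp)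
  refine (hexp.div ((hasDerivAt_id t).add_const s₀) ht).congr_deriv ?_
  simp only [barrier, id]
  field_simp

end Barrier

lemma image_le_of_hasDerivAt_lt_deriv_boundary {f g f' g' : ℝ → ℝ} {a b : ℝ}
    (hf : ∀ t ∈ Icc a b, HasDerivAt f (f' t) t) (hg : ∀ t ∈ Icc a b, HasDerivAt g (g' t) t)
    (ha : f a ≤ g a) (bound : ∀ t ∈ Ico a b, f t = g t → f' t < g' t) :
    ∀ t ∈ Icc a b, f t ≤ g t :=
  image_le_of_deriv_right_lt_deriv_boundary'
    (fun t ht => (hf t ht).continuousAt.continuousWithinAt)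
    (fun t ht => (hf t (Ico_subset_Icc_self ht)).hasDerivWithinAt) ha
    (fun t ht => (hg t ht).continuousAt.continuousWithinAt)
    (fun t ht => (hg t (Ico_subset_Icc_self ht)).hasDerivWithinAt) bound

section Competition

variable {z w : ℝ → ℝ} {τ α γ M s₀ δ : ℝ}

lemma le_barrier_of_hasDerivAt (hα : 0 < α) (hγ : 0 ≤ γ) (hM : 0 ≤ M) (hτ : τ < M)
    (hs₀ : 0 < s₀) (hz : ∀ t ∈ Icc 0 δ, HasDerivAt z (z t * (τ - α * z t - γ * w t)) t)
    (hw : ∀ t ∈ Icc 0 δ, 0 ≤ w t) (h0 : s₀ * z 0 ≤ α⁻¹) :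
    ∀ t ∈ Icc 0 δ, z t ≤ barrier α⁻¹ M s₀ t := by
  refine image_le_of_hasDerivAt_lt_deriv_boundary hz
    (fun t ht => hasDerivAt_barrier (by linarith [ht.1])) ?_ ?_
  · rw [barrier, le_div_iff₀ (by simpa using hs₀)]
    simpa [mul_comm] using h0
  · rintro t ⟨ht, htδ⟩ heq
    have hts : 0 < t + s₀ := by linarith
    have hinv : (t + s₀)⁻¹ ≤ α * barrier α⁻¹ M s₀ t := by
      rw [barrier, mul_div_assoc', ← mul_assoc, mul_inv_cancel₀ hα.ne', one_mul, inv_eq_one_div]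
      gcongr
      exact one_le_exp (mul_nonneg hM ht)
    rw [heq]
    refine mul_lt_mul_of_pos_left ?_ (barrier_pos (inv_pos.2 hα) hts)
    nlinarith [mul_nonneg hγ (hw t ⟨ht, htδ.le⟩)]

lemma barrier_le_of_hasDerivAt {β κ : ℝ} (hκ : 0 < κ) (hα : 0 ≤ α) (hγ : 0 ≤ γ) (hβ : 0 ≤ β)
    (hM : 0 ≤ M) (hτ : -M < τ) (hs₀ : 0 < s₀)
    (hz : ∀ t ∈ Icc 0 δ, HasDerivAt z (z t * (τ - α * z t - γ * w t)) t)
    (hw : ∀ t ∈ Icc 0 δ, w t ≤ barrier β M s₀ t) (hsmall : α * κ + γ * β * exp (M * δ) < 1)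
    (h0 : κ ≤ s₀ * z 0) :
    ∀ t ∈ Icc 0 δ, barrier κ (-M) s₀ t ≤ z t := by
  refine image_le_of_hasDerivAt_lt_deriv_boundary
    (fun t ht => hasDerivAt_barrier (by linarith [ht.1])) hz ?_ ?_
  · rw [barrier, div_le_iff₀ (by simpa using hs₀)]
    simpa [mul_comm] using h0
  · rintro t ⟨ht, htδ⟩ heq
    have hts : 0 < t + s₀ := by linarith
    have hz_le : α * barrier κ (-M) s₀ t ≤ α * κ / (t + s₀) := by
      rw [barrier, mul_div_assoc']
      gcongr
      exact mul_le_of_le_one_right hκ.le (exp_le_one_iff.2 (by nlinarith))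
    have hw_le : γ * w t ≤ γ * β * exp (M * δ) / (t + s₀) := by
      calc γ * w t ≤ γ * barrier β M s₀ t := mul_le_mul_of_nonneg_left (hw t ⟨ht, htδ.le⟩) hγ
        _ ≤ γ * β * exp (M * δ) / (t + s₀) := by
          rw [barrier, mul_div_assoc', ← mul_assoc]
          gcongr
    have hsum : α * barrier κ (-M) s₀ t + γ * w t < (t + s₀)⁻¹ := by
      calc _ ≤ (α * κ + γ * β * exp (M * δ)) / (t + s₀) := by rw [add_div]; linarith
        _ < (t + s₀)⁻¹ := by rw [inv_eq_one_div]; gcongr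
    rw [← heq]
    refine mul_lt_mul_of_pos_left ?_ (barrier_pos hκ hts)
    linarith

end Competition

section Prod

variable {𝕜 E F : Type*} [NontriviallyNormedField 𝕜] [NormedAddCommGroup E] [NormedSpace 𝕜 E]
  [NormedAddCommGroup F] [NormedSpace 𝕜 F] {f : 𝕜 → E × F} {f' : E × F} {t : 𝕜}

lemma HasDerivAt.fst (h : HasDerivAt f f' t) : HasDerivAt (fun s => (f s).1) f'.1 t :=
  (ContinuousLinearMap.fst 𝕜 E F).hasFDerivAt.comp_hasDerivAt t h

lemma HasDerivAt.snd (h : HasDerivAt f f' t) : HasDerivAt (fun s => (f s).2) f'.2 t :=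
  (ContinuousLinearMap.snd 𝕜 E F).hasFDerivAt.comp_hasDerivAt t h

end Prod

lemma barrier_le_of_hasDerivAt_bLV {x : ℝ → ℝ × ℝ} {τ₁ τ₂ a b c d M κ s₀ δ : ℝ}
    (ha : 0 < a) (hb : 0 < b) (hc : 0 ≤ c) (hd : 0 ≤ d) (hM : 0 ≤ M) (hτ₁ : |τ₁| < M)
    (hτ₂ : |τ₂| < M) (hκ : 0 < κ) (hs₀ : 0 < s₀) (hmem : ∀ t ∈ Icc 0 δ, 0 ≤ (x t).1 ∧ 0 ≤ (x t).2)
    (hder : ∀ t ∈ Icc 0 δ, HasDerivAt x (bLV τ₁ τ₂ a b c d (x t)) t)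
    (h₁ : a * κ + c * b⁻¹ * exp (M * δ) < 1) (h₂ : b * κ + d * a⁻¹ * exp (M * δ) < 1)
    (h0₁ : s₀ * (x 0).1 ∈ Icc κ a⁻¹) (h0₂ : s₀ * (x 0).2 ∈ Icc κ b⁻¹) :
    ∀ t ∈ Icc 0 δ, barrier κ (-M) s₀ t ≤ (x t).1 ∧ barrier κ (-M) s₀ t ≤ (x t).2 := by
  have hx₁ := fun t ht => (hder t ht).fst
  have hx₂ := fun t ht => (hder t ht).snd
  have hup₁ := le_barrier_of_hasDerivAt ha hc hM (lt_of_abs_lt hτ₁) hs₀ hx₁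
    (fun t ht => (hmem t ht).2) h0₁.2
  have hup₂ := le_barrier_of_hasDerivAt hb hd hM (lt_of_abs_lt hτ₂) hs₀ hx₂
    (fun t ht => (hmem t ht).1) h0₂.2
  exact fun t ht =>
    ⟨barrier_le_of_hasDerivAt hκ ha.le hc (inv_nonneg.2 hb.le) hM (neg_lt_of_abs_lt hτ₁) hs₀ hx₁
      hup₂ h₁ h0₁.1 t ht,
    barrier_le_of_hasDerivAt hκ hb.le hd (inv_nonneg.2 ha.le) hM (neg_lt_of_abs_lt hτ₂) hs₀ hx₂
      hup₁ h₂ h0₂.1 t ht⟩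

lemma div_le_barrier {κ M s₀ δ t : ℝ} (hκ : 0 ≤ κ) (hM : 0 ≤ M) (hs₀ : 0 < s₀) (hs₀δ : s₀ ≤ δ)
    (ht : t ∈ Icc 0 δ) : κ * exp (-M * δ) / (2 * δ) ≤ barrier κ (-M) s₀ t := by
  rw [barrier]
  exact div_le_div₀ (by positivity)
    (mul_le_mul_of_nonneg_left (exp_le_exp.2 (by nlinarith [ht.2])) hκ)
    (by linarith [ht.1]) (by linarith [ht.2])

lemma exists_barrier_params {α₁ α₂ ρ₁ ρ₂ M P : ℝ} (ε : ℝ) (hρ₁ : ρ₁ < 1) (hρ₂ : ρ₂ < 1)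
    (hP : 0 < P) : ∃ κ δ, 0 < κ ∧ κ ≤ P ∧ 0 < δ ∧ α₁ * κ + ρ₁ * exp (M * δ) < 1 ∧
      α₂ * κ + ρ₂ * exp (M * δ) < 1 ∧ ε < κ * exp (-M * δ) / (2 * δ) := by
  have hκ : ∀ᶠ κ in 𝓝 (0 : ℝ), κ < P ∧ α₁ * κ + ρ₁ < 1 ∧ α₂ * κ + ρ₂ < 1 := by
    refine (eventually_lt_nhds hP).and (Eventually.and ?_ ?_)
    · exact (by fun_prop : Continuous fun κ => α₁ * κ + ρ₁).continuousAt.eventually_lt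
        continuousAt_const (by simpa using hρ₁)
    · exact (by fun_prop : Continuous fun κ => α₂ * κ + ρ₂).continuousAt.eventually_lt
        continuousAt_const (by simpa using hρ₂)
  obtain ⟨κ, ⟨hκP, hκ₁, hκ₂⟩, hκ0 : 0 < κ⟩ :=
    ((hκ.filter_mono (nhdsWithin_le_nhds (s := Ioi 0))).and self_mem_nhdsWithin).exists
  have hδ : ∀ᶠ δ in 𝓝 (0 : ℝ),
      α₁ * κ + ρ₁ * exp (M * δ) < 1 ∧ α₂ * κ + ρ₂ * exp (M * δ) < 1 := by
    refine Eventually.and ?_ ?_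
    · exact (by fun_prop : Continuous fun δ => α₁ * κ + ρ₁ * exp (M * δ)).continuousAt
        |>.eventually_lt continuousAt_const (by simpa using hκ₁)
    · exact (by fun_prop : Continuous fun δ => α₂ * κ + ρ₂ * exp (M * δ)).continuousAt
        |>.eventually_lt continuousAt_const (by simpa using hκ₂)
  have hblow : Tendsto (fun δ => κ * exp (-M * δ) / (2 * δ)) (𝓝[>] 0) atTop := by
    have hlim : Tendsto (fun δ => κ * exp (-M * δ) / 2) (𝓝[>] 0) (𝓝 (κ / 2)) :=
      ((by fun_prop : Continuous fun δ => κ * exp (-M * δ) / 2).tendsto' 0 _ (by simp)).mono_left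
        nhdsWithin_le_nhds
    refine (hlim.pos_mul_atTop (by positivity) tendsto_inv_nhdsGT_zero).congr fun δ => by ring
  obtain ⟨δ, ⟨⟨hδ₁, hδ₂⟩, hδε⟩, hδ0 : 0 < δ⟩ :=
    (((hδ.filter_mono (nhdsWithin_le_nhds (s := Ioi 0))).and (hblow.eventually_gt_atTop ε)).and
      self_mem_nhdsWithin).exists
  exact ⟨κ, δ, hκ0, hκP.le, hδ0, hδ₁, hδ₂, hδε⟩

lemma ofReal_le_exitT {X : ℝ → ℝ → ℝ × ℝ} {ε r δ : ℝ}
    (h : ∀ t ∈ Icc 0 δ, ε < (X r t).1 ∧ ε < (X r t).2) : ENNReal.ofReal δ ≤ exitT X ε r := by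
  refine le_sInf ?_
  rintro _ ⟨t, ⟨ht, hexit⟩, rfl⟩
  exact ENNReal.ofReal_le_ofReal (not_lt.1 fun htδ => hexit (h t ⟨ht, htδ.le⟩))

theorem stmt8_general (τ₁ τ₂ a b c d : ℝ) (ha : 0 < a) (hb : 0 < b) (hc : 0 < c) (hd : 0 < d)
    (had : d < a) (hbc : c < b)
    (x₀ : ℝ × ℝ) (hx₀ : 0 < x₀.1 ∧ 0 < x₀.2)
    (X : ℝ → ℝ → ℝ × ℝ)
    (hX0 : ∀ r : ℝ, 0 < r → X r 0 = (r * x₀.1, r * x₀.2))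
    (hXmem : ∀ r : ℝ, 0 < r → ∀ t : ℝ, 0 ≤ t → 0 ≤ (X r t).1 ∧ 0 ≤ (X r t).2)
    (hXder : ∀ r : ℝ, 0 < r → ∀ t : ℝ, 0 ≤ t →
      HasDerivAt (X r) (bLV τ₁ τ₂ a b c d (X r t)) t)
    (ε : ℝ) :
    0 < Filter.liminf (fun r => exitT X ε r) Filter.atTop := by
  obtain ⟨hx₁, hx₂⟩ := hx₀
  obtain ⟨M, hM, hτ₁, hτ₂⟩ : ∃ M, 0 ≤ M ∧ |τ₁| < M ∧ |τ₂| < M :=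
    ⟨|τ₁| + |τ₂| + 1, by positivity, by linarith [abs_nonneg τ₂], by linarith [abs_nonneg τ₁]⟩
  set σ := min (a⁻¹ / x₀.1) (b⁻¹ / x₀.2)
  have hσ : 0 < σ := lt_min (by positivity) (by positivity)
  obtain ⟨κ, δ, hκ, hκσ, hδ, h₁, h₂, hε⟩ := exists_barrier_params (α₁ := a) (α₂ := b)
    (ρ₁ := c * b⁻¹) (ρ₂ := d * a⁻¹) (M := M) ε ((mul_inv_lt_iff₀ hb).2 (by linarith))
    ((mul_inv_lt_iff₀ ha).2 (by linarith)) (mul_pos hσ (lt_min hx₁ hx₂))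
  have hσ₁ : σ * x₀.1 ∈ Icc κ a⁻¹ :=
    ⟨hκσ.trans (by gcongr; exact min_le_left _ _), (le_div_iff₀ hx₁).1 (min_le_left _ _)⟩
  have hσ₂ : σ * x₀.2 ∈ Icc κ b⁻¹ :=
    ⟨hκσ.trans (by gcongr; exact min_le_right _ _), (le_div_iff₀ hx₂).1 (min_le_right _ _)⟩
  refine (ENNReal.ofReal_pos.2 hδ).trans_le (le_liminf_of_le (by isBoundedDefault) ?_)
  filter_upwards [eventually_ge_atTop (σ / δ), eventually_gt_atTop 0] with r hrδ hr
  have hs₀ : 0 < σ / r := div_pos hσ hr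
  have hinit : σ / r * (X r 0).1 = σ * x₀.1 ∧ σ / r * (X r 0).2 = σ * x₀.2 := by
    rw [hX0 r hr]; constructor <;> field_simp
  have hbar := barrier_le_of_hasDerivAt_bLV ha hb hc.le hd.le hM hτ₁ hτ₂ hκ hs₀
    (fun t ht => hXmem r hr t ht.1) (fun t ht => hXder r hr t ht.1) h₁ h₂
    (hinit.1 ▸ hσ₁) (hinit.2 ▸ hσ₂)
  refine ofReal_le_exitT fun t ht => ?_
  have := div_le_barrier hκ.le hM hs₀ ((div_le_comm₀ hδ hr).1 hrδ) ht
  exact ⟨by linarith [(hbar t ht).1], by linarith [(hbar t ht).2]⟩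

/-- When `a > d` and `b > c`, the exit time of the flow started from `r·x₀`
from `𝒟_ε = (ε,∞)²` stays bounded away from `0` as `r → ∞`. -/
theorem stmt8 (τ₁ τ₂ a b c d : ℝ) (ha : 0 < a) (hb : 0 < b) (hc : 0 < c) (hd : 0 < d)
    (had : d < a) (hbc : c < b)
    (x₀ : ℝ × ℝ) (hx₀ : 0 < x₀.1 ∧ 0 < x₀.2)
    (X : ℝ → ℝ → ℝ × ℝ)
    (hX0 : ∀ r : ℝ, 0 < r → X r 0 = (r * x₀.1, r * x₀.2))
    (hXmem : ∀ r : ℝ, 0 < r → ∀ t : ℝ, 0 ≤ t → 0 ≤ (X r t).1 ∧ 0 ≤ (X r t).2)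
    (hXder : ∀ r : ℝ, 0 < r → ∀ t : ℝ, 0 ≤ t →
      HasDerivAt (X r) (bLV τ₁ τ₂ a b c d (X r t)) t)
    (ε : ℝ) (hε : 0 < ε) :
    0 < Filter.liminf (fun r => exitT X ε r) Filter.atTop :=
  stmt8_general τ₁ τ₂ a b c d ha hb hc hd had hbc x₀ hx₀ X hX0 hXmem hXder ε
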